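/- Let T > 0 and let m₁, S be nonnegative functions in L¹((0,T)) with S > 0 a.e., and m₂ a nonnegative function in L²((0,T)). Suppose f and G are nonnegative functions on (0,T), with f absolutely continuous on [0,T), f(0) = 0, satisfying f'(t) + G(t) ≤ m₁(t) f(t) + m₂(t) [f(t) G(t) log⁺(S(t)/G(t))]^{1/2} a.e. on (0,T), where log⁺ z = max{0, log z} and G log⁺(S/G) is interpreted as its limit 0 when G = 0. Then f ≡ 0 on [0,T). -/

import Mathlib

/-!
With `ω(y) = y + y log⁺(1/y)` (`logModulus`), AM-GM gives
`m₂ √(f G log⁺(S/G)) ≤ G + (m₂² + S) ω(f)`, so the hypothesis becomes the Osgood inequality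
`f' ≤ k ω(f)` with `k = max (m₁ + m₂² + S) 0 ∈ L¹`.
As `ω(Y) = Y (1 - log Y)` for `Y ≤ 1`, the barriers `Y = exp (1 - p exp (-∫₀ᵗ k))` solve
`Y' = k ω(Y)` exactly, are positive at `0`, and are uniformly small on `[0, t₀]` for large `p`.
At the first time `c` with `Y c ≤ f c` we would get
`f c ≤ ∫₀ᶜ k ω(f) ≤ ∫₀ᶜ k ω(Y) = Y c - Y 0 < Y c`, so `f < Y` everywhere, and `f = 0`.
-/

open MeasureTheory Set Real Filter

noncomputable def logModulus (y : ℝ) : ℝ := y + y * log⁺ y⁻¹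

theorem logModulus_nonneg {y : ℝ} (hy : 0 ≤ y) : 0 ≤ logModulus y :=
  add_nonneg hy (mul_nonneg hy posLog_nonneg)

theorem le_logModulus {y : ℝ} (hy : 0 ≤ y) : y ≤ logModulus y :=
  le_add_of_nonneg_right (mul_nonneg hy posLog_nonneg)

theorem logModulus_eq_add_max_negMulLog {y : ℝ} (hy : 0 ≤ y) :
    logModulus y = y + max 0 (negMulLog y) := by
  rw [logModulus, posLog_apply, log_inv, mul_max_of_nonneg _ _ hy, negMulLog]
  simp

theorem continuousOn_logModulus : ContinuousOn logModulus (Ici 0) :=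
  (by fun_prop : Continuous fun y => y + max 0 (negMulLog y)).continuousOn.congr
    fun _ hy => logModulus_eq_add_max_negMulLog hy

theorem monotoneOn_logModulus : MonotoneOn logModulus (Ici 0) := by
  intro u hu v hv huv
  rcases (mem_Ici.1 hu).eq_or_lt with rfl | hu
  · simpa [logModulus] using logModulus_nonneg hv
  have hvu : 1 ≤ v / u := (one_le_div hu).2 huv
  have hlog : u * log⁺ (v / u) ≤ v - u := by
    rw [posLog_eq_log (by rwa [abs_of_pos (by positivity)])]
    calc u * log (v / u) ≤ u * (v / u - 1) :=
          mul_le_mul_of_nonneg_left (log_le_sub_one_of_pos (by positivity)) hu.le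
      _ = v - u := by field_simp
  have hsplit : log⁺ u⁻¹ ≤ log⁺ (v / u) + log⁺ v⁻¹ := by
    calc log⁺ u⁻¹ = log⁺ (v / u * v⁻¹) := by
          congr 1; field_simp [(hu.trans_le huv).ne']
      _ ≤ _ := posLog_mul
  unfold logModulus
  nlinarith [mul_le_mul_of_nonneg_left hsplit hu.le,
    mul_le_mul_of_nonneg_right huv (posLog_nonneg (x := v⁻¹))]

theorem logModulus_exp_one_sub {w : ℝ} (hw : 1 ≤ w) :
    logModulus (exp (1 - w)) = w * exp (1 - w) := by
  rw [logModulus, ← exp_neg, posLog_apply, log_exp, max_eq_right (by linarith)]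
  ring

namespace Real

theorem posLog_le_self {x : ℝ} (hx : 0 ≤ x) : log⁺ x ≤ x :=
  max_le hx (log_le_self hx)

theorem mul_posLog_div_le {u v : ℝ} (hu : 0 ≤ u) (hv : 0 ≤ v) : u * log⁺ (v / u) ≤ v := by
  rcases hu.eq_or_lt with rfl | hu
  · simpa using hv
  calc u * log⁺ (v / u) ≤ u * (v / u) :=
        mul_le_mul_of_nonneg_left (posLog_le_self (by positivity)) hu.le
    _ = v := by field_simp

theorem mul_posLog_div_le_mul_posLog_div_add {g s z : ℝ} (hg : 0 ≤ g) (hs : 0 ≤ s)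
    (hz : 0 < z) :
    g * log⁺ (s / g) ≤ g * log⁺ (s / z) + z := by
  rcases le_total g z with hgz | hzg
  · rcases hg.eq_or_lt with rfl | hg
    · simpa using hz.le
    calc g * log⁺ (s / g) = g * log⁺ (s / z * (z / g)) := by
          congr 2; field_simp
      _ ≤ g * (log⁺ (s / z) + log⁺ (z / g)) := mul_le_mul_of_nonneg_left posLog_mul hg.le
      _ ≤ g * log⁺ (s / z) + z := by
          rw [mul_add]; gcongr; exact mul_posLog_div_le hg.le hz.le
  · have : log⁺ (s / g) ≤ log⁺ (s / z) :=
      posLog_le_posLog (by positivity) (div_le_div_of_nonneg_left hs hz hzg)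
    nlinarith

end Real

theorem mul_sqrt_mul_posLog_le {a s g y : ℝ} (ha : 0 ≤ a) (hs : 0 ≤ s) (hg : 0 ≤ g)
    (hy : 0 ≤ y) :
    a * √(y * (g * log⁺ (s / g))) ≤ g + (a ^ 2 + s) * logModulus y := by
  have hrhs : 0 ≤ g + (a ^ 2 + s) * logModulus y :=
    add_nonneg hg (mul_nonneg (by positivity) (logModulus_nonneg hy))
  set z := a ^ 2 * y
  rcases (show 0 ≤ z by positivity).eq_or_lt with hz | hz
  · have : a * √(y * (g * log⁺ (s / g))) = √(z * (g * log⁺ (s / g))) := by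
      rw [mul_assoc, sqrt_mul (sq_nonneg a), sqrt_sq ha]
    rwa [this, ← hz, zero_mul, sqrt_zero]
  set B := log⁺ (s / z)
  -- AM-GM after trading `log⁺ (s / g)` for `log⁺ (s / z)` at the cost of `z`
  have hsqrt : a * √(y * (g * log⁺ (s / g))) ≤ g + z * B + z := by
    rw [← sqrt_sq ha, ← sqrt_mul (sq_nonneg a), ← mul_assoc]
    apply sqrt_le_iff.2 ⟨by positivity [posLog_nonneg (x := s / z)], ?_⟩
    have := mul_le_mul_of_nonneg_left (mul_posLog_div_le_mul_posLog_div_add hg hs hz) hz.le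
    nlinarith [mul_nonneg hz.le (posLog_nonneg (x := s / z)), mul_nonneg hg hz.le]
  have hB : z * B ≤ y * s + a ^ 2 * (y * log⁺ y⁻¹) := by
    have hsplit : B ≤ log⁺ (s / a ^ 2) + log⁺ y⁻¹ := by
      calc B = log⁺ (s / a ^ 2 * y⁻¹) := by simp only [B, z]; congr 1; ring
        _ ≤ _ := posLog_mul
    have := mul_posLog_div_le (sq_nonneg a) hs
    nlinarith [mul_le_mul_of_nonneg_left hsplit hz.le, mul_le_mul_of_nonneg_left this hy]
  have : 0 ≤ s * (y * log⁺ y⁻¹) := mul_nonneg hs (mul_nonneg hy posLog_nonneg)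
  unfold logModulus
  nlinarith

theorem le_mul_logModulus_of_add_le {d g m₁ m₂ s y : ℝ} (hm₁ : 0 ≤ m₁) (hm₂ : 0 ≤ m₂)
    (hs : 0 ≤ s) (hg : 0 ≤ g) (hy : 0 ≤ y)
    (h : d + g ≤ m₁ * y + m₂ * √(y * (g * log⁺ (s / g)))) :
    d ≤ (m₁ + m₂ ^ 2 + s) * logModulus y := by
  have := mul_sqrt_mul_posLog_le hm₂ hs hg hy
  nlinarith [mul_le_mul_of_nonneg_left (le_logModulus hy) hm₁]

theorem LipschitzOnWith.comp_absolutelyContinuousOnInterval {X Y : Type*} [PseudoMetricSpace X]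
    [PseudoMetricSpace Y] {φ : X → Y} {K : NNReal} {s : Set X} {f : ℝ → X} {a b : ℝ}
    (hφ : LipschitzOnWith K φ s) (hf : AbsolutelyContinuousOnInterval f a b)
    (hfs : MapsTo f (uIcc a b) s) : AbsolutelyContinuousOnInterval (φ ∘ f) a b := by
  unfold AbsolutelyContinuousOnInterval at hf ⊢
  have hK := hf.const_mul (K : ℝ)
  rw [mul_zero] at hK
  refine squeeze_zero' (Eventually.of_forall fun _ ↦ Finset.sum_nonneg fun _ _ ↦ dist_nonneg)
    (eventually_inf_principal.2 (Eventually.of_forall fun E hE ↦ ?_)) hK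
  rw [Finset.mul_sum]
  exact Finset.sum_le_sum fun i hi ↦
    hφ.dist_le_mul _ (hfs (hE.1 i hi).1) _ (hfs (hE.1 i hi).2)

theorem LocallyLipschitz.comp_absolutelyContinuousOnInterval {X Y : Type*}
    [SeminormedAddCommGroup X] [PseudoMetricSpace Y] {φ : X → Y} {f : ℝ → X} {a b : ℝ}
    (hφ : LocallyLipschitz φ) (hf : AbsolutelyContinuousOnInterval f a b) :
    AbsolutelyContinuousOnInterval (φ ∘ f) a b := by
  have hcpt : IsCompact (f '' uIcc a b) := isCompact_uIcc.image_of_continuousOn hf.continuousOn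
  obtain ⟨K, hK⟩ :=
    (hφ.locallyLipschitzOn (s := f '' uIcc a b)).exists_lipschitzOnWith_of_compact hcpt
  exact hK.comp_absolutelyContinuousOnInterval hf (mapsTo_image f _)

theorem IntervalIntegrable.integral_deriv_comp_primitive_mul {k Ψ : ℝ → ℝ} {a b : ℝ}
    (hk : IntervalIntegrable k volume a b) (hΨ : ContDiff ℝ 1 Ψ) :
    ∫ x in a..b, deriv Ψ (∫ u in a..x, k u) * k x = Ψ (∫ u in a..b, k u) - Ψ 0 := by
  have hac := hΨ.locallyLipschitz.comp_absolutelyContinuousOnInterval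
    (hk.absolutelyContinuousOnInterval_intervalIntegral left_mem_uIcc)
  have h0 : ∫ u in a..a, k u = 0 := intervalIntegral.integral_same
  rw [← h0]
  refine Eq.trans ?_ hac.integral_deriv_eq_sub
  refine intervalIntegral.integral_congr_ae ?_
  filter_upwards [hk.ae_hasDerivAt_integral] with x hx hxab
  have hd := ((hΨ.differentiable one_ne_zero _).hasDerivAt.comp x
    (hx (uIoc_subset_uIcc hxab) a left_mem_uIcc))
  exact hd.deriv.symm

theorem IntervalIntegrable.mul_logModulus_comp {k G : ℝ → ℝ} {a b : ℝ}
    (hk : IntervalIntegrable k volume a b) (hG : ContinuousOn G (uIcc a b))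
    (hG0 : ∀ x ∈ uIcc a b, 0 ≤ G x) :
    IntervalIntegrable (fun x ↦ k x * logModulus (G x)) volume a b :=
  hk.mul_continuousOn (continuousOn_logModulus.comp hG hG0)

theorem integral_mul_logModulus_exp_one_sub_mul_exp_neg {k : ℝ → ℝ} {a b p : ℝ}
    (hk : IntervalIntegrable k volume a b)
    (hp : ∀ x ∈ uIcc a b, 1 ≤ p * exp (-∫ u in a..x, k u)) :
    ∫ x in a..b, k x * logModulus (exp (1 - p * exp (-∫ u in a..x, k u))) =
      exp (1 - p * exp (-∫ u in a..b, k u)) - exp (1 - p) := by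
  have hΨ : ∀ z, HasDerivAt (fun z ↦ exp (1 - p * exp (-z)))
      (p * exp (-z) * exp (1 - p * exp (-z))) z :=
    fun z ↦ by simpa [mul_comm] using (((hasDerivAt_neg z).exp.const_mul p).const_sub 1).exp
  have h := hk.integral_deriv_comp_primitive_mul
    (show ContDiff ℝ 1 fun z ↦ exp (1 - p * exp (-z)) by fun_prop)
  rw [neg_zero, exp_zero, mul_one] at h
  rw [← h]
  refine intervalIntegral.integral_congr fun x hx ↦ ?_
  simp only [(hΨ _).deriv, logModulus_exp_one_sub (hp x hx), mul_comm]

theorem forall_lt_of_continuousOn_of_forall_Ico_lt {F Y : ℝ → ℝ} {a b : ℝ}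
    (hF : ContinuousOn F (Icc a b)) (hY : ContinuousOn Y (Icc a b))
    (h : ∀ c ∈ Icc a b, (∀ x ∈ Ico a c, F x < Y x) → F c < Y c) :
    ∀ t ∈ Icc a b, F t < Y t := by
  by_contra! hcross
  obtain ⟨c, ⟨hc, hFc⟩, hcmin⟩ := (isCompact_Icc.of_isClosed_subset
    (isClosed_Icc.isClosed_le hY hF) (sep_subset _ _)).exists_isLeast hcross
  refine (h c hc fun x hx ↦ lt_of_not_ge fun hx' ↦ ?_).not_ge hFc
  exact (hx.2.trans_le (hcmin ⟨⟨hx.1, hx.2.le.trans hc.2⟩, hx'⟩)).false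

theorem lt_exp_one_sub_of_le_integral_mul_logModulus {k F : ℝ → ℝ} {t₀ w : ℝ}
    (hk : IntervalIntegrable k volume 0 t₀) (hk0 : ∀ x ∈ Icc 0 t₀, 0 ≤ k x)
    (hF : ContinuousOn F (Icc 0 t₀)) (hF0 : ∀ x ∈ Icc 0 t₀, 0 ≤ F x)
    (hle : ∀ t ∈ Icc 0 t₀, F t ≤ ∫ x in 0..t, k x * logModulus (F x))
    (hw : 1 ≤ w) : ∀ t ∈ Icc 0 t₀, F t < exp (1 - w) := by
  set κ : ℝ → ℝ := fun t ↦ ∫ x in 0..t, k x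
  set p := w * exp (κ t₀)
  -- `p` is chosen so that the barrier `Y` (a solution of `Y' = k * logModulus Y`) has
  -- `Y t₀ = exp (1 - w)`
  set Y : ℝ → ℝ := fun t ↦ exp (1 - p * exp (-κ t))
  have hp : ∀ t ∈ Icc 0 t₀, w ≤ p * exp (-κ t) := by
    intro t ht
    have hκt : κ t ≤ κ t₀ := intervalIntegral.integral_mono_interval le_rfl ht.1 ht.2
      ((ae_restrict_iff' measurableSet_Ioc).2
        (ae_of_all _ fun x hx ↦ hk0 x (Ioc_subset_Icc_self hx))) hk
    calc w = p * exp (-κ t₀) := by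
          simp only [p, mul_assoc, ← exp_add, add_neg_cancel, exp_zero, mul_one]
      _ ≤ p * exp (-κ t) := by gcongr
  suffices hbarrier : ∀ t ∈ Icc 0 t₀, F t < Y t from fun t ht ↦
    (hbarrier t ht).trans_le (exp_le_exp.2 (by linarith [hp t ht]))
  have hκ : ContinuousOn κ (Icc 0 t₀) :=
    (intervalIntegral.continuousOn_primitive_interval' hk left_mem_uIcc).mono Icc_subset_uIcc
  refine forall_lt_of_continuousOn_of_forall_Ico_lt hF (by fun_prop) fun c hc hbelow ↦ ?_
  have hsub : uIcc 0 c ⊆ Icc 0 t₀ := by rw [uIcc_of_le hc.1]; exact Icc_subset_Icc_right hc.2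
  have hkc : IntervalIntegrable k volume 0 c := hk.mono_set (hsub.trans Icc_subset_uIcc)
  have hFY : ∫ x in 0..c, k x * logModulus (F x) ≤ ∫ x in 0..c, k x * logModulus (Y x) := by
    refine intervalIntegral.integral_mono_on_of_le_Ioo hc.1
      (hkc.mul_logModulus_comp (hF.mono hsub) fun x hx ↦ hF0 x (hsub hx))
      (hkc.mul_logModulus_comp ((by fun_prop : ContinuousOn Y _).mono hsub)
        fun x _ ↦ (exp_pos _).le)
      fun x hx ↦ ?_
    have hx' : x ∈ Icc 0 t₀ := hsub (Ioo_subset_Icc_self.trans Icc_subset_uIcc hx)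
    exact mul_le_mul_of_nonneg_left (monotoneOn_logModulus (hF0 x hx') (exp_pos _).le
      (hbelow x (Ioo_subset_Ico_self hx)).le) (hk0 x hx')
  have hYc : ∫ x in 0..c, k x * logModulus (Y x) = Y c - exp (1 - p) :=
    integral_mul_logModulus_exp_one_sub_mul_exp_neg hkc fun x hx ↦ hw.trans (hp x (hsub hx))
  linarith [hle c hc, exp_pos (1 - p)]

theorem eq_zero_of_le_integral_mul_logModulus {k F : ℝ → ℝ} {t₀ : ℝ}
    (hk : IntervalIntegrable k volume 0 t₀) (hk0 : ∀ x ∈ Icc 0 t₀, 0 ≤ k x)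
    (hF : ContinuousOn F (Icc 0 t₀)) (hF0 : ∀ x ∈ Icc 0 t₀, 0 ≤ F x)
    (hle : ∀ t ∈ Icc 0 t₀, F t ≤ ∫ x in 0..t, k x * logModulus (F x)) :
    ∀ t ∈ Icc 0 t₀, F t = 0 := by
  intro t ht
  refine le_antisymm (ge_of_tendsto
    (tendsto_exp_atBot.comp (tendsto_atBot_add_const_left _ 1 tendsto_neg_atTop_atBot)) ?_)
    (hF0 t ht)
  filter_upwards [eventually_ge_atTop 1] with w hw
  exact (lt_exp_one_sub_of_le_integral_mul_logModulus hk hk0 hF hF0 hle hw t ht).le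

theorem eq_zero_of_ae_le_mul_logModulus {k f f' : ℝ → ℝ} {t₀ : ℝ}
    (hk : IntervalIntegrable k volume 0 t₀) (hk0 : ∀ x ∈ Icc 0 t₀, 0 ≤ k x)
    (hf' : IntervalIntegrable f' volume 0 t₀)
    (hf : ∀ t ∈ Icc 0 t₀, f t = ∫ x in 0..t, f' x)
    (hf0 : ∀ t ∈ Icc 0 t₀, 0 ≤ f t)
    (hle : ∀ᵐ x ∂volume.restrict (Ioc 0 t₀), f' x ≤ k x * logModulus (f x)) :
    ∀ t ∈ Icc 0 t₀, f t = 0 := by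
  have hfc : ContinuousOn f (Icc 0 t₀) :=
    ((intervalIntegral.continuousOn_primitive_interval' hf' left_mem_uIcc).mono
      Icc_subset_uIcc).congr hf
  refine eq_zero_of_le_integral_mul_logModulus hk hk0 hfc hf0 fun t ht ↦ ?_
  have hsub : uIcc 0 t ⊆ Icc 0 t₀ := by rw [uIcc_of_le ht.1]; exact Icc_subset_Icc_right ht.2
  have hint := (hk.mono_set (hsub.trans Icc_subset_uIcc)).mul_logModulus_comp (hfc.mono hsub)
    fun x hx ↦ hf0 x (hsub hx)
  rw [hf t ht, intervalIntegral.integral_of_le ht.1, intervalIntegral.integral_of_le ht.1]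
  exact setIntegral_mono_ae_restrict (hf'.mono_set (hsub.trans Icc_subset_uIcc)).1 hint.1
    (ae_restrict_of_ae_restrict_of_subset (Ioc_subset_Ioc_right ht.2) hle)

theorem stmt1_general (T : ℝ)
    (m₁ m₂ S f G f' : ℝ → ℝ)
    (hm₁0 : ∀ t ∈ Ioo 0 T, 0 ≤ m₁ t) (hm₂0 : ∀ t ∈ Ioo 0 T, 0 ≤ m₂ t)
    (hSnn : ∀ t ∈ Ioo 0 T, 0 ≤ S t)
    (hm₁ : IntegrableOn m₁ (Ioo 0 T)) (hS : IntegrableOn S (Ioo 0 T))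
    (hm₂ : MemLp m₂ 2 (volume.restrict (Ioo 0 T)))
    (hf0 : ∀ t ∈ Ioo 0 T, 0 ≤ f t) (hG0 : ∀ t ∈ Ioo 0 T, 0 ≤ G t)
    (hf'int : IntegrableOn f' (Ioo 0 T))
    (hAC : ∀ t ∈ Ico 0 T, f t = ∫ s in Ioo 0 t, f' s)
    (hineq : ∀ᵐ t ∂(volume.restrict (Ioo 0 T)),
      f' t + G t ≤ m₁ t * f t +
        m₂ t * Real.sqrt (f t * (if G t = 0 then 0
          else G t * max 0 (Real.log (S t / G t))))) :
    ∀ t ∈ Ico 0 T, f t = 0 := by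
  intro t ht
  set K : ℝ → ℝ := fun x ↦ max (m₁ x + m₂ x ^ 2 + S x) 0
  have hsub : Ioc 0 t ⊆ Ioo 0 T := Ioc_subset_Ioo_right ht.2
  have hint : ∀ {g : ℝ → ℝ}, IntegrableOn g (Ioo 0 T) → IntervalIntegrable g volume 0 t :=
    fun hg ↦ (intervalIntegrable_iff_integrableOn_Ioc_of_le ht.1).2 (hg.mono_set hsub)
  have hprim : ∀ x ∈ Icc 0 t, f x = ∫ u in 0..x, f' u := fun x hx ↦ by
    rw [hAC x ⟨hx.1, hx.2.trans_lt ht.2⟩, intervalIntegral.integral_of_le hx.1,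
      integral_Ioc_eq_integral_Ioo]
  refine eq_zero_of_ae_le_mul_logModulus (k := K)
    (hint ((hm₁.add hm₂.integrable_sq).add hS).pos_part)
    (fun x _ ↦ le_max_right _ _) (hint hf'int) hprim (fun x hx ↦ ?_) ?_ t ⟨ht.1, le_rfl⟩
  · rcases hx.1.eq_or_lt with rfl | hx0
    · rw [hprim 0 hx, intervalIntegral.integral_same]
    · exact hf0 x ⟨hx0, hx.2.trans_lt ht.2⟩
  filter_upwards [ae_restrict_of_ae_restrict_of_subset hsub hineq,
    ae_restrict_mem measurableSet_Ioc] with x hx hxt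
  have hxT := hsub hxt
  have hG : (if G x = 0 then 0 else G x * max 0 (Real.log (S x / G x))) =
      G x * log⁺ (S x / G x) := by
    split_ifs with h
    · simp [h]
    · rfl
  rw [hG] at hx
  exact (le_mul_logModulus_of_add_le (hm₁0 x hxT) (hm₂0 x hxT) (hSnn x hxT) (hG0 x hxT)
    (hf0 x hxT) hx).trans (mul_le_mul_of_nonneg_right (le_max_left _ _)
      (logModulus_nonneg (hf0 x hxT)))

theorem stmt1 (T : ℝ) (hT : 0 < T)
    (m₁ m₂ S f G f' : ℝ → ℝ)
    (hm₁0 : ∀ t ∈ Ioo 0 T, 0 ≤ m₁ t) (hm₂0 : ∀ t ∈ Ioo 0 T, 0 ≤ m₂ t)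
    (hSnn : ∀ t ∈ Ioo 0 T, 0 ≤ S t)
    (hm₁ : IntegrableOn m₁ (Ioo 0 T)) (hS : IntegrableOn S (Ioo 0 T))
    (hSpos : ∀ᵐ t ∂(volume.restrict (Ioo 0 T)), 0 < S t)
    (hm₂ : MemLp m₂ 2 (volume.restrict (Ioo 0 T)))
    (hf0 : ∀ t ∈ Ioo 0 T, 0 ≤ f t) (hG0 : ∀ t ∈ Ioo 0 T, 0 ≤ G t)
    (hf'int : IntegrableOn f' (Ioo 0 T))
    (hAC : ∀ t ∈ Ico 0 T, f t = ∫ s in Ioo 0 t, f' s)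
    (hineq : ∀ᵐ t ∂(volume.restrict (Ioo 0 T)),
      f' t + G t ≤ m₁ t * f t +
        m₂ t * Real.sqrt (f t * (if G t = 0 then 0
          else G t * max 0 (Real.log (S t / G t))))) :
    ∀ t ∈ Ico 0 T, f t = 0 :=
  stmt1_general T m₁ m₂ S f G f' hm₁0 hm₂0 hSnn hm₁ hS hm₂ hf0 hG0 hf'int hAC hineq
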